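/- Consider the zero-field Ising model on a finite connected simple graph G = (V,E) with couplings J(e) ≥ J_min > 0 at inverse temperature β > 0, and fix p ∈ V. The Gibbs probability that there exists a border B of G with B ⊆ D(σ) and with p internal to B is at most Σ_{b=1}^{|E|} μ^p(b) · e^{−2 β J_min b}. -/

import Mathlib

/-!
Peierls argument. If every edge of a border `B` disagrees under `σ`, flipping all spins on one
side of `B` makes these edges agree and leaves every other edge unchanged, so it lowers the
energy by `2 ∑_{e ∈ B} J e ≥ 2 Jmin |B|`. Flipping is injective, hence the Gibbs weight of
`{σ | B ⊆ D(σ)}` is at most `e^{-2 β Jmin |B|} Z`. A union bound over the borders to which `p` is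
internal, grouped by size (a border of a connected graph is a nonempty set of edges), gives the
estimate.
-/

open scoped BigOperators Classical

namespace PG

variable {V : Type*}

/-- The product of the spins at the two endpoints of an unordered pair. -/
def spinProd (σ : V → ℤ) : Sym2 V → ℤ :=
  Sym2.lift ⟨fun i j => σ i * σ j, fun i j => mul_comm (σ i) (σ j)⟩

/-- The spins at the two endpoints of an unordered pair disagree. -/
def Disagrees (σ : V → ℤ) : Sym2 V → Prop :=
  Sym2.lift ⟨fun i j => σ i ≠ σ j, fun i j => propext ne_comm⟩

/-- The disagreement edge set D(σ) of a spin configuration. -/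
def disagreeSet (G : SimpleGraph V) (σ : V → ℤ) : Set (Sym2 V) :=
  {e | e ∈ G.edgeSet ∧ Disagrees σ e}

/-- A spin configuration takes values ±1. -/
def IsSpin (σ : V → ℤ) : Prop := ∀ v, σ v = 1 ∨ σ v = -1

/-- `B` is a border of `G` with sides `P₁`, `P₂`. -/
structure IsBorderWith (G : SimpleGraph V) (B : Set (Sym2 V)) (P₁ P₂ : Set V) : Prop where
  disj : Disjoint P₁ P₂
  cover : P₁ ∪ P₂ = Set.univ
  ne₁ : P₁.Nonempty
  ne₂ : P₂.Nonempty
  conn₁ : (G.induce P₁).Connected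
  conn₂ : (G.induce P₂).Connected
  eq_edges : B = {e | e ∈ G.edgeSet ∧ ∃ i ∈ P₁, ∃ j ∈ P₂, e = s(i, j)}

/-- `B` is a border of `G`. -/
def IsBorder (G : SimpleGraph V) (B : Set (Sym2 V)) : Prop :=
  ∃ P₁ P₂ : Set V, IsBorderWith G B P₁ P₂

/-- `p` is internal to the border `B`: it lies on the side with no more vertices. -/
def InternalTo (G : SimpleGraph V) (p : V) (B : Set (Sym2 V)) : Prop :=
  ∃ P₁ P₂ : Set V, IsBorderWith G B P₁ P₂ ∧ p ∈ P₁ ∧ P₁.ncard ≤ P₂.ncard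

/-- μ^p(b): the number of borders of cardinality `b` to which `p` is internal. -/
noncomputable def mu (G : SimpleGraph V) (p : V) (b : ℕ) : ℕ :=
  {B : Finset (Sym2 V) | B.card = b ∧ InternalTo G p ↑B}.ncard

/-- The vertex border of `B` on side `P`: endpoints of edges of `B` lying in `P`. -/
def vertexBorder (B : Set (Sym2 V)) (P : Set V) : Set V :=
  {v | v ∈ P ∧ ∃ e ∈ B, v ∈ e}

/-- Encoding of spin configurations by boolean functions. -/
def toSpin (τ : V → Bool) : V → ℤ := fun v => if τ v then 1 else -1

/-- The zero-field Ising Hamiltonian. -/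
noncomputable def hamiltonian [Fintype V] (G : SimpleGraph V) [Fintype G.edgeSet]
    (J : Sym2 V → ℝ) (σ : V → ℤ) : ℝ :=
  -∑ e ∈ G.edgeFinset, J e * (spinProd σ e : ℝ)

/-- The partition function Z at inverse temperature β. -/
noncomputable def partitionZ [Fintype V] [DecidableEq V] (G : SimpleGraph V)
    [Fintype G.edgeSet] (J : Sym2 V → ℝ) (β : ℝ) : ℝ :=
  ∑ τ : V → Bool, Real.exp (-β * hamiltonian G J (toSpin τ))

/-- Gibbs expectation of an observable `f` at inverse temperature β. -/
noncomputable def gibbsExp [Fintype V] [DecidableEq V] (G : SimpleGraph V)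
    [Fintype G.edgeSet] (J : Sym2 V → ℝ) (β : ℝ) (f : (V → ℤ) → ℝ) : ℝ :=
  (∑ τ : V → Bool, f (toSpin τ) * Real.exp (-β * hamiltonian G J (toSpin τ))) /
    partitionZ G J β

/-- Gibbs probability of an event `S` at inverse temperature β. -/
noncomputable def gibbsProb [Fintype V] [DecidableEq V] (G : SimpleGraph V)
    [Fintype G.edgeSet] (J : Sym2 V → ℝ) (β : ℝ) (S : (V → ℤ) → Prop) : ℝ :=
  gibbsExp G J β (fun σ => if S σ then 1 else 0)

/-- The magnetization M(σ). -/
noncomputable def magn [Fintype V] (σ : V → ℤ) : ℝ :=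
  (∑ i, (σ i : ℝ)) / (Fintype.card V : ℝ)

/-- The external vertex boundary of a set of vertices. -/
def extBoundary (G : SimpleGraph V) (A : Set V) : Set V :=
  {v | v ∉ A ∧ ∃ a ∈ A, G.Adj v a}

/-- A (C,d)-isoperimetric inequality. -/
def IsoIneq (G : SimpleGraph V) (C d : ℝ) : Prop :=
  ∀ A : Set V, A.Finite → A.Nonempty → A ≠ Set.univ →
    (extBoundary G A).Infinite ∨
      C * (A.ncard : ℝ) ^ ((d - 1) / d) ≤ ((extBoundary G A).ncard : ℝ)

/-- `G` has growth exponent `df`: balls of radius `r ≥ 1` contain at most `r^df` vertices. -/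
def HasGrowth (G : SimpleGraph V) (df : ℝ) : Prop :=
  ∀ p : V, ∀ r : ℕ, 1 ≤ r → (({q : V | G.dist p q ≤ r}).ncard : ℝ) ≤ (r : ℝ) ^ df

/-- ν_q(b): the number of vertex sets containing `q` arising as a vertex border of a
border of cardinality `b`. -/
noncomputable def nu (G : SimpleGraph V) (q : V) (b : ℕ) : ℕ :=
  {S : Set V | q ∈ S ∧ ∃ (B : Finset (Sym2 V)) (P₁ P₂ : Set V),
    IsBorderWith G ↑B P₁ P₂ ∧ B.card = b ∧ S = vertexBorder ↑B P₂}.ncard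

noncomputable def flipSide (P : Set V) (τ : V → Bool) : V → Bool :=
  fun v => if v ∈ P then !τ v else τ v

lemma flipSide_injective (P : Set V) : Function.Injective (flipSide P) :=
  Function.Involutive.injective fun τ => funext fun v => by
    by_cases h : v ∈ P <;> simp [flipSide, h]

lemma toSpin_flipSide_of_mem {P : Set V} (τ : V → Bool) {v : V} (h : v ∈ P) :
    toSpin (flipSide P τ) v = -toSpin τ v := by
  simp only [flipSide, toSpin, if_pos h]
  cases τ v <;> simp

lemma toSpin_flipSide_of_notMem {P : Set V} (τ : V → Bool) {v : V} (h : v ∉ P) :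
    toSpin (flipSide P τ) v = toSpin τ v := by
  simp only [flipSide, toSpin, if_neg h]

lemma spinProd_toSpin_of_disagrees (τ : V → Bool) {e : Sym2 V}
    (h : Disagrees (toSpin τ) e) : spinProd (toSpin τ) e = -1 := by
  induction e using Sym2.ind with
  | _ i j =>
    change toSpin τ i ≠ toSpin τ j at h
    change toSpin τ i * toSpin τ j = -1
    unfold toSpin at *
    cases hi : τ i <;> cases hj : τ j <;> simp [hi, hj] at h ⊢

namespace IsBorderWith

variable {G : SimpleGraph V} {B : Set (Sym2 V)} {P₁ P₂ : Set V}

lemma mem_right_of_notMem_left (hB : IsBorderWith G B P₁ P₂) {v : V} (hv : v ∉ P₁) : v ∈ P₂ :=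
  (hB.cover ▸ Set.mem_univ v : v ∈ P₁ ∪ P₂).resolve_left hv

lemma mk_mem (hB : IsBorderWith G B P₁ P₂) {i j : V} (hij : G.Adj i j) (hi : i ∈ P₁)
    (hj : j ∉ P₁) : s(i, j) ∈ B := by
  rw [hB.eq_edges]
  exact ⟨hij, i, hi, j, hB.mem_right_of_notMem_left hj, rfl⟩

lemma subset_edgeSet (hB : IsBorderWith G B P₁ P₂) : B ⊆ G.edgeSet := by
  rw [hB.eq_edges]
  exact fun _ he => he.1

lemma nonempty (hB : IsBorderWith G B P₁ P₂) (hG : G.Connected) : B.Nonempty := by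
  obtain ⟨a, ha⟩ := hB.ne₁
  obtain ⟨b, hb⟩ := hB.ne₂
  obtain ⟨w⟩ := hG.preconnected a b
  obtain ⟨d, -, hd₁, hd₂⟩ := w.exists_boundary_dart P₁ ha (Set.disjoint_right.mp hB.disj hb)
  exact ⟨_, hB.mk_mem d.adj hd₁ hd₂⟩

lemma spinProd_flipSide_of_mem (hB : IsBorderWith G B P₁ P₂) (τ : V → Bool) {e : Sym2 V}
    (he : e ∈ B) : spinProd (toSpin (flipSide P₁ τ)) e = -spinProd (toSpin τ) e := by
  rw [hB.eq_edges] at he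
  obtain ⟨-, i, hi, j, hj, rfl⟩ := he
  change toSpin (flipSide P₁ τ) i * toSpin (flipSide P₁ τ) j = -(toSpin τ i * toSpin τ j)
  rw [toSpin_flipSide_of_mem τ hi,
    toSpin_flipSide_of_notMem τ (Set.disjoint_right.mp hB.disj hj), neg_mul]

lemma spinProd_flipSide_of_notMem (hB : IsBorderWith G B P₁ P₂) (τ : V → Bool) {e : Sym2 V}
    (he : e ∈ G.edgeSet) (heB : e ∉ B) :
    spinProd (toSpin (flipSide P₁ τ)) e = spinProd (toSpin τ) e := by
  induction e using Sym2.ind with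
  | _ i j =>
    change toSpin (flipSide P₁ τ) i * toSpin (flipSide P₁ τ) j = toSpin τ i * toSpin τ j
    by_cases hi : i ∈ P₁ <;> by_cases hj : j ∈ P₁
    · rw [toSpin_flipSide_of_mem τ hi, toSpin_flipSide_of_mem τ hj, neg_mul_neg]
    · exact absurd (hB.mk_mem he hi hj) heB
    · exact absurd (Sym2.eq_swap ▸ hB.mk_mem (G.adj_symm he) hj hi) heB
    · rw [toSpin_flipSide_of_notMem τ hi, toSpin_flipSide_of_notMem τ hj]

end IsBorderWith

section Gibbs

variable [Fintype V] [DecidableEq V] {G : SimpleGraph V} [Fintype G.edgeSet] {J : Sym2 V → ℝ}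
  {β : ℝ}

lemma hamiltonian_eq_hamiltonian_flipSide_add {B : Finset (Sym2 V)} {P₁ P₂ : Set V}
    (hB : IsBorderWith G ↑B P₁ P₂) {τ : V → Bool} (hD : ↑B ⊆ disagreeSet G (toSpin τ)) :
    hamiltonian G J (toSpin τ) =
      hamiltonian G J (toSpin (flipSide P₁ τ)) + 2 * ∑ e ∈ B, J e := by
  have hBE : B ⊆ G.edgeFinset := fun e he => G.mem_edgeFinset.mpr (hB.subset_edgeSet he)
  have hedge : ∀ e ∈ G.edgeFinset,
      J e * (spinProd (toSpin (flipSide P₁ τ)) e : ℝ) - J e * (spinProd (toSpin τ) e : ℝ) =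
        if e ∈ B then 2 * J e else 0 := by
    intro e he
    split_ifs with heB
    · rw [hB.spinProd_flipSide_of_mem τ heB, spinProd_toSpin_of_disagrees τ (hD heB).2]
      push_cast
      ring
    · rw [hB.spinProd_flipSide_of_notMem τ (G.mem_edgeFinset.mp he) heB, sub_self]
  have hdiff := Finset.sum_congr rfl hedge
  rw [Finset.sum_sub_distrib, Finset.sum_ite_mem, Finset.inter_eq_right.mpr hBE,
    ← Finset.mul_sum] at hdiff
  unfold hamiltonian
  linarith

lemma partitionZ_pos : 0 < partitionZ G J β :=
  Finset.sum_pos (fun _ _ => Real.exp_pos _) Finset.univ_nonempty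

lemma gibbsExp_mono {f g : (V → ℤ) → ℝ} (h : ∀ σ, f σ ≤ g σ) :
    gibbsExp G J β f ≤ gibbsExp G J β g :=
  div_le_div_of_nonneg_right
    (Finset.sum_le_sum fun _ _ => mul_le_mul_of_nonneg_right (h _) (Real.exp_pos _).le)
    partitionZ_pos.le

lemma gibbsExp_sum {ι : Type*} (s : Finset ι) (f : ι → (V → ℤ) → ℝ) :
    gibbsExp G J β (fun σ => ∑ i ∈ s, f i σ) = ∑ i ∈ s, gibbsExp G J β (f i) := by
  simp only [gibbsExp, Finset.sum_mul, ← Finset.sum_div]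
  rw [Finset.sum_comm]

lemma gibbsProb_le_sum {ι : Type*} {S : (V → ℤ) → Prop} (s : Finset ι)
    (E : ι → (V → ℤ) → Prop) (h : ∀ σ, S σ → ∃ i ∈ s, E i σ) :
    gibbsProb G J β S ≤ ∑ i ∈ s, gibbsProb G J β (E i) := by
  simp only [gibbsProb]
  rw [← gibbsExp_sum]
  refine gibbsExp_mono fun σ => ?_
  split_ifs with hS
  · obtain ⟨i, hi, hE⟩ := h σ hS
    calc (1 : ℝ) = if E i σ then 1 else 0 := (if_pos hE).symm
      _ ≤ ∑ j ∈ s, if E j σ then 1 else 0 :=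
        Finset.single_le_sum (f := fun j => if E j σ then (1 : ℝ) else 0)
          (fun _ _ => by positivity) hi
  · exact Finset.sum_nonneg fun _ _ => by positivity

lemma gibbsProb_eq_sum_filter_div (S : (V → ℤ) → Prop) :
    gibbsProb G J β S =
      (∑ τ with S (toSpin τ), Real.exp (-β * hamiltonian G J (toSpin τ))) / partitionZ G J β := by
  simp only [gibbsProb, gibbsExp, ite_mul, one_mul, zero_mul, Finset.sum_filter]

lemma gibbsProb_subset_disagreeSet_le {Jmin : ℝ} (hJ : ∀ e ∈ G.edgeFinset, Jmin ≤ J e)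
    (hβ : 0 ≤ β) {B : Finset (Sym2 V)} {P₁ P₂ : Set V} (hB : IsBorderWith G ↑B P₁ P₂) :
    gibbsProb G J β (fun σ => ↑B ⊆ disagreeSet G σ) ≤ Real.exp (-2 * β * Jmin * B.card) := by
  set w : (V → Bool) → ℝ := fun τ => Real.exp (-β * hamiltonian G J (toSpin τ))
  set s := Finset.univ.filter fun τ : V → Bool => ↑B ⊆ disagreeSet G (toSpin τ)
  have hflip : ∀ τ ∈ s, w τ ≤ Real.exp (-2 * β * Jmin * B.card) * w (flipSide P₁ τ) := by
    intro τ hτ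
    have hJB : B.card * Jmin ≤ ∑ e ∈ B, J e := by
      rw [← nsmul_eq_mul]
      exact Finset.card_nsmul_le_sum _ _ _ fun e he =>
        hJ e (G.mem_edgeFinset.mpr (hB.subset_edgeSet (Finset.mem_coe.mpr he)))
    simp only [w, ← Real.exp_add, Real.exp_le_exp,
      hamiltonian_eq_hamiltonian_flipSide_add hB (Finset.mem_filter.mp hτ).2]
    nlinarith
  rw [gibbsProb_eq_sum_filter_div, div_le_iff₀ partitionZ_pos]
  calc ∑ τ ∈ s, w τ ≤ ∑ τ ∈ s, Real.exp (-2 * β * Jmin * B.card) * w (flipSide P₁ τ) :=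
        Finset.sum_le_sum hflip
    _ = Real.exp (-2 * β * Jmin * B.card) * ∑ τ ∈ s.image (flipSide P₁), w τ := by
        rw [Finset.sum_image fun _ _ _ _ h => flipSide_injective P₁ h, Finset.mul_sum]
    _ ≤ Real.exp (-2 * β * Jmin * B.card) * partitionZ G J β :=
        mul_le_mul_of_nonneg_left
          (Finset.sum_le_sum_of_subset_of_nonneg (Finset.subset_univ _)
            fun _ _ _ => (Real.exp_pos _).le)
          (Real.exp_pos _).le

end Gibbs

noncomputable def internalBorders [Fintype V] (G : SimpleGraph V) (p : V) :
    Finset (Finset (Sym2 V)) :=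
  Finset.univ.filter fun B => InternalTo G p ↑B

lemma mu_eq_card_filter [Fintype V] (G : SimpleGraph V) (p : V) (b : ℕ) :
    mu G p b = ((internalBorders G p).filter fun B => B.card = b).card := by
  rw [mu, ← Set.ncard_coe_finset]
  congr 1
  ext B
  simp [internalBorders, and_comm]

lemma sum_internalBorders_eq_sum_mu [Fintype V] {G : SimpleGraph V} [Fintype G.edgeSet]
    (hG : G.Connected) (p : V) (g : ℕ → ℝ) :
    ∑ B ∈ internalBorders G p, g B.card =
      ∑ b ∈ Finset.Icc 1 G.edgeFinset.card, mu G p b * g b := by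
  have hcard : ∀ B ∈ internalBorders G p,
      B.card ∈ Finset.Icc 1 G.edgeFinset.card := by
    intro B hB
    obtain ⟨P₁, P₂, hBW, -, -⟩ := (Finset.mem_filter.mp hB).2
    exact Finset.mem_Icc.mpr ⟨(Finset.coe_nonempty.mp (hBW.nonempty hG)).card_pos,
      Finset.card_le_card fun e he => G.mem_edgeFinset.mpr (hBW.subset_edgeSet he)⟩
  rw [← Finset.sum_fiberwise_of_maps_to hcard]
  refine Finset.sum_congr rfl fun b _ => ?_
  rw [Finset.sum_congr rfl fun B hB => by rw [(Finset.mem_filter.mp hB).2], Finset.sum_const,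
    nsmul_eq_mul, mu_eq_card_filter]

theorem stmt_6_general {V : Type*} [Fintype V] [DecidableEq V] (G : SimpleGraph V)
    [DecidableRel G.Adj] (hG : G.Connected)
    (J : Sym2 V → ℝ) (Jmin : ℝ)
    (hJ : ∀ e ∈ G.edgeFinset, Jmin ≤ J e) (β : ℝ) (hβ : 0 < β) (p : V) :
    gibbsProb G J β (fun σ => ∃ B : Finset (Sym2 V),
        IsBorder G ↑B ∧ ↑B ⊆ disagreeSet G σ ∧ InternalTo G p ↑B) ≤
      ∑ b ∈ Finset.Icc 1 G.edgeFinset.card,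
        (mu G p b : ℝ) * Real.exp (-2 * β * Jmin * (b : ℝ)) :=
  calc _ ≤ ∑ B ∈ internalBorders G p,
          gibbsProb G J β (fun σ => ↑B ⊆ disagreeSet G σ) :=
        gibbsProb_le_sum _ _ fun _ ⟨B, _, hD, hp⟩ => ⟨B, Finset.mem_filter.mpr ⟨Finset.mem_univ _, hp⟩, hD⟩
    _ ≤ ∑ B ∈ internalBorders G p, Real.exp (-2 * β * Jmin * B.card) :=
        Finset.sum_le_sum fun _ hB => by
          obtain ⟨P₁, P₂, hBW, -, -⟩ := (Finset.mem_filter.mp hB).2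
          exact gibbsProb_subset_disagreeSet_le hJ hβ.le hBW
    _ = _ := sum_internalBorders_eq_sum_mu hG p fun b => Real.exp (-2 * β * Jmin * b)

/-- the Gibbs probability that some border made of disagreement edges has
`p` internal to it is at most `Σ_{b=1}^{|E|} μ^p(b) · exp (−2 β Jmin b)`. -/
theorem stmt_6 {V : Type*} [Fintype V] [DecidableEq V] (G : SimpleGraph V)
    [DecidableRel G.Adj] (hG : G.Connected)
    (J : Sym2 V → ℝ) (Jmin : ℝ) (hJmin : 0 < Jmin)
    (hJ : ∀ e ∈ G.edgeFinset, Jmin ≤ J e) (β : ℝ) (hβ : 0 < β) (p : V) :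
    gibbsProb G J β (fun σ => ∃ B : Finset (Sym2 V),
        IsBorder G ↑B ∧ ↑B ⊆ disagreeSet G σ ∧ InternalTo G p ↑B) ≤
      ∑ b ∈ Finset.Icc 1 G.edgeFinset.card,
        (mu G p b : ℝ) * Real.exp (-2 * β * Jmin * (b : ℝ)) :=
  stmt_6_general G hG J Jmin hJ β hβ p

end PG
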